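/- arXiv:1803.04353 — 4 statements merged into one kernel-verified Lean document; each statement's English description precedes it below -/
import Mathlib

section
/- Let J be a positive integer, A a finite set with m elements, and Γ ∈ {0,1}^{J×A} a binary matrix whose columns are pairwise distinct. Let Θ = (θ_{j,α}) be a real J×A matrix such that for each row j, all entries θ_{j,α} with Γ_{j,α}=1 are equal to a common value θ_{j,1}, and θ_{j,α'} < θ_{j,1} whenever Γ_{j,α'}=0. Define the 2^J × m matrix T(Θ) with rows indexed by binary response patterns r ∈ {0,1}^J and entries T_{r,α}(Θ) = ∏_{j : r_j = 1} θ_{j,α} (empty product equal to 1). Then T(Θ) has full column rank m, i.e., its columns are linearly independent. -/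
/-!
Subtracting `θ1 j` from every entry of row `j` is an invertible linear operation on the rows of
the T-matrix, since `∏_{j ∈ r} (θ_{j,α} - θ1_j)` expands into the entries `T_{s,α}`, `s ⊆ r`, with
coefficients not depending on `α`. After the shift, `θ_{j,α} - θ1_j` vanishes exactly where
`Γ_{j,α} = 1`, so the zero sets of the columns are pairwise distinct. Evaluating at the row `r`
supported off the zero set of `α` kills every column whose zero set is not contained in that of
`α`, and induction on the zero sets (ordered by inclusion) makes the matrix triangular.
-/

open scoped Matrix

section TMatrix

variable {ι A R : Type*} [Fintype ι]

/-- The column of the T-matrix of a parameter vector `x`: its entry at the response pattern `r`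
is `∏_{j : r j} x j`. -/
def patternProd [CommMonoid R] (x : ι → R) (r : ι → Bool) : R :=
  ∏ j, if r j then x j else 1

theorem patternProd_eq_zero_iff [CommMonoidWithZero R] [NoZeroDivisors R] [Nontrivial R]
    (x : ι → R) (r : ι → Bool) : patternProd x r = 0 ↔ ∃ j, r j = true ∧ x j = 0 := by
  simp [patternProd, Finset.prod_eq_zero_iff, ite_eq_iff]

section Shift

variable [DecidableEq ι] [CommRing R]

/-- `shiftCoeff c a b` is the coefficient of `x^b` in `(x - c)^a`, for exponents `a b ∈ {0, 1}`. -/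
def shiftCoeff (c : R) : Bool → Bool → R
  | true, true => 1
  | true, false => -c
  | false, true => 0
  | false, false => 1

def shiftMatrix (t : ι → R) : Matrix (ι → Bool) (ι → Bool) R :=
  fun r s => ∏ j, shiftCoeff (t j) (r j) (s j)

theorem shiftMatrix_mulVec_patternProd (t x : ι → R) :
    shiftMatrix t *ᵥ patternProd x = patternProd (x - t) := by
  ext r
  have hfactor : ∀ j, ∑ b : Bool, shiftCoeff (t j) (r j) b * (if b then x j else 1) =
      if r j then x j - t j else 1 := by
    intro j
    cases r j <;> simp [shiftCoeff]; ring
  simp only [Matrix.mulVec, dotProduct, shiftMatrix, patternProd, ← Finset.prod_mul_distrib]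
  rw [← Fintype.prod_sum (fun j b => shiftCoeff (t j) (r j) b * (if b then x j else 1))]
  simp only [hfactor, Pi.sub_apply]

theorem linearIndependent_patternProd_of_sub (x : A → ι → R) (t : ι → R)
    (h : LinearIndependent R fun α => patternProd (x α - t)) :
    LinearIndependent R fun α => patternProd (x α) :=
  LinearIndependent.of_comp (shiftMatrix t).mulVecLin <| by
    simpa [Function.comp_def, shiftMatrix_mulVec_patternProd] using h

end Shift

theorem linearIndependent_patternProd_of_injective_zeroSet [Fintype A] [CommRing R]
    [NoZeroDivisors R] [Nontrivial R] (y : A → ι → R)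
    (hy : Function.Injective fun α => {j | y α j = 0}) :
    LinearIndependent R fun α => patternProd (y α) := by
  classical
  rw [Fintype.linearIndependent_iff]
  intro c hc α
  induction α using (InvImage.wf (fun α => {j | y α j = 0}) wellFounded_lt).induction with
  | _ α ih =>
  let r : ι → Bool := fun j => y α j ≠ 0
  have hrow := congrFun hc r
  simp only [Finset.sum_apply, Pi.smul_apply, smul_eq_mul, Pi.zero_apply] at hrow
  rw [Finset.sum_eq_single α _ (by simp)] at hrow
  · refine (mul_eq_zero.mp hrow).resolve_right ?_
    simp [patternProd_eq_zero_iff, r]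
  · intro β _ hβα
    by_cases hsub : {j | y β j = 0} ⊆ {j | y α j = 0}
    · rw [ih β (hsub.lt_of_ne (hy.ne hβα)), zero_mul]
    · obtain ⟨j, hjβ, hjα⟩ := Set.not_subset.mp hsub
      rw [(patternProd_eq_zero_iff _ _).mpr ⟨j, by simpa [r] using hjα, hjβ⟩, mul_zero]

end TMatrix

theorem stmt0_general {J : ℕ} {A : Type*} [Fintype A]
    (Γ : Fin J → A → Bool) (Θ : Fin J → A → ℝ) (θ1 : Fin J → ℝ)
    (hsep : ∀ α α' : A, (∀ j, Γ j α = Γ j α') → α = α')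
    (heq : ∀ j α, Γ j α = true → Θ j α = θ1 j)
    (hlt : ∀ j α, Γ j α = false → Θ j α < θ1 j) :
    LinearIndependent ℝ
      (fun α : A => (fun r : Fin J → Bool => ∏ j, if r j then Θ j α else 1)) := by
  have hzero : ∀ α, {j | ((fun j => Θ j α) - θ1) j = 0} = {j | Γ j α = true} := by
    intro α
    ext j
    cases hΓ : Γ j α
    · simpa [hΓ, sub_eq_zero] using (hlt j α hΓ).ne
    · simpa [hΓ, sub_eq_zero] using heq j α hΓ
  refine linearIndependent_patternProd_of_sub (fun α j => Θ j α) θ1 ?_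
  refine linearIndependent_patternProd_of_injective_zeroSet _ fun α β hαβ => hsep α β fun j => ?_
  have hΓ : {j | Γ j α = true} = {j | Γ j β = true} := by rw [← hzero, ← hzero]; exact hαβ
  exact Bool.eq_iff_iff.mpr (Set.ext_iff.mp hΓ j)

/-- The T-matrix of a restricted latent class model with separable Γ has full
column rank: its columns (indexed by latent classes) are linearly independent. -/
theorem stmt0 {J : ℕ} (hJ : 0 < J) {A : Type*} [Fintype A]
    (Γ : Fin J → A → Bool) (Θ : Fin J → A → ℝ) (θ1 : Fin J → ℝ)
    (hsep : ∀ α α' : A, (∀ j, Γ j α = Γ j α') → α = α')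
    (heq : ∀ j α, Γ j α = true → Θ j α = θ1 j)
    (hlt : ∀ j α, Γ j α = false → Θ j α < θ1 j) :
    LinearIndependent ℝ
      (fun α : A => (fun r : Fin J → Bool => ∏ j, if r j then Θ j α else 1)) :=
  stmt0_general Γ Θ θ1 hsep heq hlt
end

section
/- Consider a two-parameter restricted latent class model: J items, finite class set A, Γ ∈ {0,1}^{J×A}, and for each item j two real parameters θ_j^+ > θ_j^-, with θ_{j,α} = θ_j^+ if Γ_{j,α}=1 and θ_{j,α} = θ_j^- otherwise. Define T_{r,α}(Θ) = ∏_{j: r_j=1} θ_{j,α} for r ∈ {0,1}^J. If the columns of Γ are pairwise distinct (Γ is separable), then for any two vectors p, p̄ ∈ ℝ^A, the equality T(Θ)p = T(Θ)p̄ (i.e., Σ_α T_{r,α}(Θ) p_α = Σ_α T_{r,α}(Θ) p̄_α for all r ∈ {0,1}^J) implies p = p̄. -/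
/-!
Put `q = p - p̄`, so that `q` is orthogonal to every monomial `α ↦ ∏_{j ∈ S} θ_{j,α}`. Expanding
`∏_j (θ_{j,α} - t_j)` into such monomials shows that `q` is orthogonal to it as well, for any
`t`. Given a class `α₀`, take `t_j` to be the parameter of item `j` that `α₀` does *not* have:
the factor of item `j` vanishes exactly when `α` and `α₀` disagree on `j`, so by separability the
product is nonzero at `α₀` and zero at every other class, whence `q α₀ = 0`.
-/

open Finset

section Monomials

variable {ι A R : Type*} [Fintype ι] [Fintype A] [CommRing R]

theorem sum_prod_sub_mul_eq_zero (θ : ι → A → R) (q : A → R)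
    (hq : ∀ S : Finset ι, ∑ α, (∏ j ∈ S, θ j α) * q α = 0) (t : ι → R) :
    ∑ α, (∏ j, (θ j α - t j)) * q α = 0 := by
  classical
  have hexpand : ∀ α, ∏ j, (θ j α - t j) =
      ∑ S ∈ univ.powerset, (∏ j ∈ S, θ j α) * ∏ j ∈ univ \ S, (-t j) := fun α => by
    simp only [sub_eq_add_neg, prod_add]
  calc ∑ α, (∏ j, (θ j α - t j)) * q α
      = ∑ S ∈ univ.powerset, (∏ j ∈ univ \ S, (-t j)) * ∑ α, (∏ j ∈ S, θ j α) * q α := by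
        simp only [hexpand, sum_mul, mul_sum]
        rw [sum_comm]
        refine sum_congr rfl fun S _ => sum_congr rfl fun α _ => by ring
    _ = 0 := sum_eq_zero fun S _ => by rw [hq S, mul_zero]

theorem eq_zero_of_sum_prod_mul_eq_zero [IsDomain R] (θ : ι → A → R) (q : A → R)
    (hq : ∀ S : Finset ι, ∑ α, (∏ j ∈ S, θ j α) * q α = 0)
    (hsep : ∀ α₀, ∃ t : ι → R, (∀ j, θ j α₀ ≠ t j) ∧ ∀ α ≠ α₀, ∃ j, θ j α = t j) :
    q = 0 := by
  classical
  funext α₀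
  obtain ⟨t, hα₀, hα⟩ := hsep α₀
  have hsingle := sum_prod_sub_mul_eq_zero θ q hq t
  rw [sum_eq_single_of_mem α₀ (mem_univ _) fun α _ hne => by
    obtain ⟨j, hj⟩ := hα α hne
    rw [prod_eq_zero (mem_univ j) (sub_eq_zero.mpr hj), zero_mul]] at hsingle
  exact (mul_eq_zero.mp hsingle).resolve_left
    (prod_ne_zero_iff.mpr fun j _ => sub_ne_zero.mpr (hα₀ j))

end Monomials

theorem exists_separating_params {ι A R : Type*} (Γ : ι → A → Bool) (θp θm : ι → R)
    (hθ : ∀ j, θp j ≠ θm j) (hsep : ∀ α α' : A, (∀ j, Γ j α = Γ j α') → α = α') (α₀ : A) :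
    ∃ t : ι → R, (∀ j, (if Γ j α₀ then θp j else θm j) ≠ t j) ∧
      ∀ α ≠ α₀, ∃ j, (if Γ j α then θp j else θm j) = t j := by
  refine ⟨fun j => if Γ j α₀ then θm j else θp j, fun j => ?_, fun α hne => ?_⟩
  · dsimp only
    split_ifs
    exacts [hθ j, (hθ j).symm]
  · obtain ⟨j, hj⟩ : ∃ j, Γ j α ≠ Γ j α₀ := by
      by_contra! hall
      exact hne (hsep α α₀ hall)
    refine ⟨j, ?_⟩
    cases h : Γ j α <;> cases h₀ : Γ j α₀ <;> simp_all

/-- In a two-parameter restricted latent class model with separable Γ and known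
item parameters, the proportion parameters are identifiable. -/
theorem stmt2 {J : ℕ} {A : Type*} [Fintype A]
    (Γ : Fin J → A → Bool) (θp θm : Fin J → ℝ)
    (hθ : ∀ j, θm j < θp j)
    (hsep : ∀ α α' : A, (∀ j, Γ j α = Γ j α') → α = α')
    (p pbar : A → ℝ)
    (h : ∀ r : Fin J → Bool,
      ∑ α, (∏ j, if r j then (if Γ j α then θp j else θm j) else 1) * p α =
      ∑ α, (∏ j, if r j then (if Γ j α then θp j else θm j) else 1) * pbar α) :
    p = pbar := by
  classical
  have hq : ∀ S : Finset (Fin J),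
      ∑ α, (∏ j ∈ S, if Γ j α then θp j else θm j) * (p - pbar) α = 0 := fun S => by
    have := h (fun j => decide (j ∈ S))
    simp only [decide_eq_true_eq, prod_ite_mem, univ_inter] at this
    simp only [Pi.sub_apply, mul_sub, sum_sub_distrib, this, sub_self]
  exact sub_eq_zero.mp <| eq_zero_of_sum_prod_mul_eq_zero _ _ hq
    (exists_separating_params Γ θp θm (fun j => (hθ j).ne') hsep)
end

section
/- Let Q ∈ {0,1}^{J×K} with rows q_1,…,q_J, and define the conjunctive ideal response matrix Γ ∈ {0,1}^{J×2^K} with columns indexed by all α ∈ {0,1}^K, via Γ_{j,α} = 1 iff q_j ⪯ α. Then the columns of Γ are pairwise distinct if and only if for every attribute k ∈ {1,…,K} there exists an item j with q_j = e_k (the k-th standard unit vector). In particular, if some e_k is not a row of Q, then the columns of Γ indexed by the zero vector and by e_k coincide. -/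
/-!
The order `⪯` is the pointwise order on `ι → Bool`. A unit vector `e k` lies below `α` exactly when `α k = true`, so a row `e k` of `Q` reads off
coordinate `k` of the attribute profile; with all unit vectors present, `Γ` determines `α`.
Conversely, a row `r ≠ e k` lies below `e k` only if `r = 0`, so without the row `e k` no item
distinguishes the profiles `0` and `e k`.
-/

namespace ConjunctiveQMatrix

variable {ι : Type*}

theorem pi_bool_le_iff {r α : ι → Bool} : r ≤ α ↔ ∀ k, r k = true → α k = true := by
  simp only [Pi.le_def, Bool.le_iff_imp]

variable [DecidableEq ι]

abbrev unitVec (k : ι) : ι → Bool := fun k' => decide (k' = k)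

theorem unitVec_le_iff {k : ι} {α : ι → Bool} : unitVec k ≤ α ↔ α k = true := by
  simp [pi_bool_le_iff]

theorem le_unitVec_iff_le_bot {k : ι} {r : ι → Bool} (hr : r ≠ unitVec k) :
    r ≤ unitVec k ↔ r ≤ ⊥ := by
  refine ⟨fun hle => ?_, fun hbot => hbot.trans bot_le⟩
  by_contra hpos
  obtain ⟨k', hk'⟩ : ∃ k', r k' = true := by
    simpa only [pi_bool_le_iff, Pi.bot_apply, bot_eq_false, Bool.false_eq_true, imp_false,
      not_forall, not_not] using hpos
  have hk'k : k' = k := by simpa using pi_bool_le_iff.mp hle k' hk'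
  subst hk'k
  exact hr (le_antisymm hle (unitVec_le_iff.mpr hk'))

theorem eq_of_forall_le_iff_of_complete {J : Type*} {q : J → ι → Bool}
    (hcomplete : ∀ k, ∃ j, q j = unitVec k) {α α' : ι → Bool}
    (hΓ : ∀ j, q j ≤ α ↔ q j ≤ α') : α = α' := by
  funext k
  obtain ⟨j, hj⟩ := hcomplete k
  have hk : α k = true ↔ α' k = true := by
    simpa only [hj, unitVec_le_iff] using hΓ j
  exact Bool.eq_iff_iff.mpr hk

end ConjunctiveQMatrix

open ConjunctiveQMatrix in
/-- Over the saturated class space {0,1}^K, the conjunctive ideal response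
matrix Γ has pairwise distinct columns iff Q contains every unit vector e_k as
a row (Q is complete); if some e_k is missing, the columns indexed by 0 and e_k
coincide. -/
theorem stmt10 {J K : ℕ} (q : Fin J → Fin K → Bool) :
    ((∀ α α' : Fin K → Bool,
        (∀ j, ((∀ k, q j k = true → α k = true) ↔ (∀ k, q j k = true → α' k = true))) →
        α = α') ↔
      ∀ k : Fin K, ∃ j : Fin J, q j = fun k' => decide (k' = k)) ∧
    ∀ k : Fin K, (¬ ∃ j : Fin J, q j = fun k' => decide (k' = k)) →
      ∀ j : Fin J,
        ((∀ k', q j k' = true → (decide (k' = k) : Bool) = true) ↔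
          (∀ k', q j k' = true → (false : Bool) = true)) := by
  have hcoincide : ∀ k, (¬ ∃ j, q j = unitVec k) → ∀ j, q j ≤ unitVec k ↔ q j ≤ ⊥ :=
    fun _ hmissing j => le_unitVec_iff_le_bot fun h => hmissing ⟨j, h⟩
  simp only [← pi_bool_le_iff] at hcoincide ⊢
  refine ⟨⟨fun hsep k => ?_, fun hcomplete α α' => eq_of_forall_le_iff_of_complete hcomplete⟩,
    hcoincide⟩
  by_contra hmissing
  have hcol := congrFun (hsep _ _ (hcoincide k hmissing)) k
  simp at hcol
end

section
/- Consider two two-parameter restricted latent class models on the same Γ ∈ {0,1}^{J×A} with strictly positive probability vectors p, p̄ on A and parameters satisfying θ_h^+ > θ_h^- and θ̄_h^+ > θ̄_h^- for all items h. Suppose the two models induce the same response distribution (Σ_α p_α ∏_{j: r_j=1} θ_{j,α} = Σ_α p̄_α ∏_{j: r_j=1} θ̄_{j,α} for all r ∈ {0,1}^J). Let S ⊆ {1,…,J} be a set of items on which the parameters agree: θ_h^+ = θ̄_h^+ and θ_h^- = θ̄_h^- for all h ∈ S. Suppose item j ∉ S is S-differentiable: there exist subsets S^+, S^- ⊆ S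 with C_{S^+} ⊊ C_{S^-} and C_{S^-} \ C_{S^+} ⊆ A \ C_j, where C_T = {α : Γ_{h,α}=1 for all h ∈ T}. Then θ_j^- = θ̄_j^-. -/
/-!
The response distribution determines every moment `∑ α, p α * ∏ h ∈ R, θ_{h,α}`. For a set `T`
of items whose parameters are known, expanding `∏ h ∈ T, (θ_{h,α} - θ_h^-)` into such moments
shows that it is `∏ h ∈ T, (θ_h^+ - θ_h^-)` times the indicator of `C_T`, so both models give
`C_T` the same mass, and also the same `θ_j`-weighted mass when `j ∉ T`. Subtracting the
identities for `C_{S^- ∪ S^+} = C_{S^-} ∩ C_{S^+}` from those for `C_{S^-}` isolates the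
nonempty set `C_{S^-} \ C_{S^+}`, on which `θ_j` equals `θ_j^-` in both models.
-/

open Finset

namespace RestrictedLatentClass

variable {ι A R : Type*}

/-- `θ_{h,α}` in the paper's notation. -/
def itemParam (Γ : ι → A → Bool) (θp θm : ι → R) (h : ι) (α : A) : R :=
  if Γ h α then θp h else θm h

/-- `C_T` in the paper's notation. -/
def capabilitySet [Fintype A] (Γ : ι → A → Bool) (T : Finset ι) : Finset A :=
  {α | ∀ h ∈ T, Γ h α = true}

theorem mem_capabilitySet [Fintype A] {Γ : ι → A → Bool} {T : Finset ι} {α : A} :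
    α ∈ capabilitySet Γ T ↔ ∀ h ∈ T, Γ h α = true := by
  simp [capabilitySet]

theorem capabilitySet_union [Fintype A] [DecidableEq ι] [DecidableEq A] (Γ : ι → A → Bool)
    (s t : Finset ι) : capabilitySet Γ (s ∪ t) = capabilitySet Γ s ∩ capabilitySet Γ t := by
  ext α
  simp only [mem_inter, mem_capabilitySet, forall_mem_union]

theorem prod_itemParam_sub [CommRing R] (Γ : ι → A → Bool) (θp θm : ι → R) (T : Finset ι)
    (α : A) :
    ∏ h ∈ T, (itemParam Γ θp θm h α - θm h) =
      if ∀ h ∈ T, Γ h α = true then ∏ h ∈ T, (θp h - θm h) else 0 := by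
  split_ifs with hα
  · exact prod_congr rfl fun h hh => by simp [itemParam, hα h hh]
  · obtain ⟨h, hT, hΓ⟩ : ∃ h ∈ T, Γ h α = false := by simpa using hα
    exact prod_eq_zero hT (by simp [itemParam, hΓ])

theorem prod_itemParam_congr [CommMonoid R] (Γ : ι → A → Bool) {θp θm θp' θm' : ι → R}
    {T : Finset ι} (hT : ∀ h ∈ T, θp h = θp' h ∧ θm h = θm' h) (α : A) :
    ∏ h ∈ T, itemParam Γ θp θm h α = ∏ h ∈ T, itemParam Γ θp' θm' h α :=
  prod_congr rfl fun h hh => by simp [itemParam, hT h hh]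

/-- `∏ h ∈ T, (x h α - y h)` expands into the moments `∏ h ∈ t, x h α`, `t ⊆ T`. -/
theorem sum_mul_prod_sub_eq_of_forall_subset [CommRing R] [Fintype A] [DecidableEq ι]
    {c c' : A → R} {x : ι → A → R} (y : ι → R) {T : Finset ι}
    (hmom : ∀ t ⊆ T, ∑ α, c α * ∏ h ∈ t, x h α = ∑ α, c' α * ∏ h ∈ t, x h α) :
    ∑ α, c α * ∏ h ∈ T, (x h α - y h) = ∑ α, c' α * ∏ h ∈ T, (x h α - y h) := by
  have expand : ∀ d : A → R, ∑ α, d α * ∏ h ∈ T, (x h α - y h) =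
      ∑ t ∈ T.powerset, (∏ h ∈ T \ t, -y h) * ∑ α, d α * ∏ h ∈ t, x h α := by
    intro d
    simp_rw [sub_eq_add_neg, prod_add, mul_sum]
    rw [sum_comm]
    exact sum_congr rfl fun t _ => sum_congr rfl fun α _ => by ring
  rw [expand, expand]
  exact sum_congr rfl fun t ht => by rw [hmom t (mem_powerset.mp ht)]

theorem sum_capabilitySet_eq_of_forall_subset [CommRing R] [IsDomain R] [Fintype A]
    [DecidableEq ι] {Γ : ι → A → Bool} {θp θm : ι → R} {c c' : A → R} {T : Finset ι}
    (hne : ∀ h ∈ T, θp h ≠ θm h)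
    (hmom : ∀ t ⊆ T, ∑ α, c α * ∏ h ∈ t, itemParam Γ θp θm h α =
      ∑ α, c' α * ∏ h ∈ t, itemParam Γ θp θm h α) :
    ∑ α ∈ capabilitySet Γ T, c α = ∑ α ∈ capabilitySet Γ T, c' α := by
  have key := sum_mul_prod_sub_eq_of_forall_subset θm hmom
  have hK : ∏ h ∈ T, (θp h - θm h) ≠ 0 :=
    prod_ne_zero_iff.mpr fun h hh => sub_ne_zero.mpr (hne h hh)
  simp_rw [prod_itemParam_sub, mul_ite, mul_zero, ← sum_filter, ← sum_mul] at key
  exact mul_right_cancel₀ hK key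

theorem sum_capabilitySet_mul_prod_eq [CommRing R] [IsDomain R] [Fintype A] [DecidableEq ι]
    {Γ : ι → A → Bool} {θp θm θp' θm' : ι → R} {p p' : A → R}
    (hmoment : ∀ U : Finset ι, ∑ α, p α * ∏ h ∈ U, itemParam Γ θp θm h α =
      ∑ α, p' α * ∏ h ∈ U, itemParam Γ θp' θm' h α)
    {S T U : Finset ι} (hagree : ∀ h ∈ S, θp h = θp' h ∧ θm h = θm' h)
    (hne : ∀ h ∈ S, θp h ≠ θm h) (hT : T ⊆ S) (hU : Disjoint U S) :
    ∑ α ∈ capabilitySet Γ T, p α * ∏ h ∈ U, itemParam Γ θp θm h α =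
      ∑ α ∈ capabilitySet Γ T, p' α * ∏ h ∈ U, itemParam Γ θp' θm' h α := by
  refine sum_capabilitySet_eq_of_forall_subset (fun h hh => hne h (hT hh)) fun t ht => ?_
  have hUt : Disjoint U t := hU.mono_right (ht.trans hT)
  have hagree_t : ∀ h ∈ t, θp' h = θp h ∧ θm' h = θm h := fun h hh =>
    (hagree h (hT (ht hh))).imp Eq.symm Eq.symm
  simpa only [prod_union hUt, prod_itemParam_congr Γ hagree_t, mul_assoc] using hmoment (U ∪ t)

theorem sum_capabilitySet_sdiff_eq [Fintype A] [DecidableEq ι] [DecidableEq A]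
    [AddCancelCommMonoid R] {Γ : ι → A → Bool} {s t : Finset ι} {f g : A → R}
    (hs : ∑ α ∈ capabilitySet Γ s, f α = ∑ α ∈ capabilitySet Γ s, g α)
    (hst : ∑ α ∈ capabilitySet Γ (s ∪ t), f α = ∑ α ∈ capabilitySet Γ (s ∪ t), g α) :
    ∑ α ∈ capabilitySet Γ s \ capabilitySet Γ t, f α =
      ∑ α ∈ capabilitySet Γ s \ capabilitySet Γ t, g α := by
  rw [capabilitySet_union] at hst
  rw [← sum_inter_add_sum_sdiff _ (capabilitySet Γ t) f,
    ← sum_inter_add_sum_sdiff _ (capabilitySet Γ t) g, hst] at hs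
  exact add_left_cancel hs

end RestrictedLatentClass

open RestrictedLatentClass

theorem stmt15_general {J : ℕ} {A : Type*} [Fintype A]
    (Γ : Fin J → A → Bool)
    (θp θm θbp θbm : Fin J → ℝ)
    (hθ : ∀ h, θm h < θp h)
    (p pbar : A → ℝ)
    (hp : ∀ α, 0 < p α)
    (hdist : ∀ r : Fin J → Bool,
      ∑ α, p α * ∏ j, (if r j then (if Γ j α then θp j else θm j) else 1) =
      ∑ α, pbar α * ∏ j, (if r j then (if Γ j α then θbp j else θbm j) else 1))
    (S : Finset (Fin J))
    (hagree : ∀ h ∈ S, θp h = θbp h ∧ θm h = θbm h)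
    (j : Fin J) (hj : j ∉ S)
    (Sp Sm : Finset (Fin J)) (hSp : Sp ⊆ S) (hSm : Sm ⊆ S)
    (hproper : ∃ α : A, (∀ h ∈ Sm, Γ h α = true) ∧ ¬ (∀ h ∈ Sp, Γ h α = true))
    (hdiff : ∀ α : A, (∀ h ∈ Sm, Γ h α = true) → ¬ (∀ h ∈ Sp, Γ h α = true) →
      Γ j α = false) :
    θm j = θbm j := by
  classical
  set θ := itemParam Γ θp θm
  set θb := itemParam Γ θbp θbm
  have hmoment (R : Finset (Fin J)) :
      ∑ α, p α * ∏ h ∈ R, θ h α = ∑ α, pbar α * ∏ h ∈ R, θb h α := by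
    simpa [θ, θb, itemParam, prod_ite_mem] using hdist (fun h => decide (h ∈ R))
  have hne : ∀ h ∈ S, θp h ≠ θm h := fun h _ => (hθ h).ne'
  have hmass (T : Finset (Fin J)) (hT : T ⊆ S) :
      ∑ α ∈ capabilitySet Γ T, p α = ∑ α ∈ capabilitySet Γ T, pbar α := by
    simpa using sum_capabilitySet_mul_prod_eq hmoment hagree hne hT (disjoint_empty_left S)
  have hmass_j (T : Finset (Fin J)) (hT : T ⊆ S) :
      ∑ α ∈ capabilitySet Γ T, p α * θ j α = ∑ α ∈ capabilitySet Γ T, pbar α * θb j α := by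
    simpa using sum_capabilitySet_mul_prod_eq hmoment hagree hne hT (disjoint_singleton_left.2 hj)
  have hSu : Sm ∪ Sp ⊆ S := union_subset hSm hSp
  set D := capabilitySet Γ Sm \ capabilitySet Γ Sp
  have hmassD : ∑ α ∈ D, p α = ∑ α ∈ D, pbar α :=
    sum_capabilitySet_sdiff_eq (hmass Sm hSm) (hmass _ hSu)
  have hmassD_j : ∑ α ∈ D, p α * θ j α = ∑ α ∈ D, pbar α * θb j α :=
    sum_capabilitySet_sdiff_eq (hmass_j Sm hSm) (hmass_j _ hSu)
  have hminus (α : A) (hα : α ∈ D) : θ j α = θm j ∧ θb j α = θbm j := by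
    rw [mem_sdiff, mem_capabilitySet, mem_capabilitySet] at hα
    simp [θ, θb, itemParam, hdiff α hα.1 hα.2]
  obtain ⟨α₀, hα₀⟩ := hproper
  have hpos : 0 < ∑ α ∈ D, p α :=
    sum_pos (fun α _ => hp α) ⟨α₀, by simpa [D, mem_capabilitySet] using hα₀⟩
  rw [sum_congr rfl fun α hα => congrArg (p α * ·) (hminus α hα).1,
    sum_congr rfl fun α hα => congrArg (pbar α * ·) (hminus α hα).2,
    ← sum_mul, ← sum_mul, ← hmassD] at hmassD_j
  exact mul_left_cancel₀ hpos.ne' hmassD_j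

/-- Sequential differentiation: if the item parameters of the two models agree
on a set S and item j ∉ S is S-differentiable, then θ_j^- is identifiable. -/
theorem stmt15 {J : ℕ} {A : Type*} [Fintype A]
    (Γ : Fin J → A → Bool)
    (θp θm θbp θbm : Fin J → ℝ)
    (hθ : ∀ h, θm h < θp h) (hθb : ∀ h, θbm h < θbp h)
    (p pbar : A → ℝ)
    (hp : ∀ α, 0 < p α) (hp1 : ∑ α, p α = 1)
    (hpb : ∀ α, 0 < pbar α) (hpb1 : ∑ α, pbar α = 1)
    (hdist : ∀ r : Fin J → Bool,
      ∑ α, p α * ∏ j, (if r j then (if Γ j α then θp j else θm j) else 1) =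
      ∑ α, pbar α * ∏ j, (if r j then (if Γ j α then θbp j else θbm j) else 1))
    (S : Finset (Fin J))
    (hagree : ∀ h ∈ S, θp h = θbp h ∧ θm h = θbm h)
    (j : Fin J) (hj : j ∉ S)
    (Sp Sm : Finset (Fin J)) (hSp : Sp ⊆ S) (hSm : Sm ⊆ S)
    (hsub : ∀ α : A, (∀ h ∈ Sp, Γ h α = true) → (∀ h ∈ Sm, Γ h α = true))
    (hproper : ∃ α : A, (∀ h ∈ Sm, Γ h α = true) ∧ ¬ (∀ h ∈ Sp, Γ h α = true))
    (hdiff : ∀ α : A, (∀ h ∈ Sm, Γ h α = true) → ¬ (∀ h ∈ Sp, Γ h α = true) →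
      Γ j α = false) :
    θm j = θbm j :=
  stmt15_general Γ θp θm θbp θbm hθ p pbar hp hdist S hagree j hj Sp Sm hSp hSm hproper hdiff
end
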